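/- (Selective value of threshold games) For j ∈ {1,...,n}, let G_j = (ϱ_j, σ_j) be weighted quantum retrieval games with utility functions valued in [0,1], finite nonempty answer sets, positive definite reduced density matrices, and Sel(G_j) = δ_j. Set δ = (1/n)∑_{j=1}^n δ_j, and let γ satisfy δ ≤ γ ≤ 1 with γ·n an integer. Define the threshold game G_γ whose ensemble is the n-fold tensor product ⊗_j ϱ_j (on the Kronecker product space, indexed over S₁×...×S_n) and whose {0,1}-valued utility is σ_γ(s⃗, a⃗) = 1 if ∑_{j=1}^n σ_j(s_j, a_j) ≥ γ·n and 0 otherwise. Then Sel(G_γ) ≤ 2·exp(−n·D(γ‖δ)). -/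

import Mathlib

open Matrix
open scoped ComplexOrder
open scoped ComplexOrder

namespace QRG

variable {n S A : Type*}

/-- The normalization `∑_{s,a} Tr[P(a)ϱ(s)]` of the distribution induced by an
indexed ensemble `ϱ` and a selective projection `P`. -/
noncomputable def normZ [Fintype n] [Fintype S] [Fintype A]
    (ϱ : S → Matrix n n ℂ) (P : A → Matrix n n ℂ) : ℝ :=
  ∑ s, ∑ a, (Matrix.trace (P a * ϱ s)).re

/-- The induced probability distribution `⟨ϱ, P⟩(s,a) = Tr[P(a)ϱ(s)] / normZ`. -/
noncomputable def induced [Fintype n] [Fintype S] [Fintype A]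
    (ϱ : S → Matrix n n ℂ) (P : A → Matrix n n ℂ) (s : S) (a : A) : ℝ :=
  (Matrix.trace (P a * ϱ s)).re / normZ ϱ P

/-- The value `Val(G,P) = ∑_{s,a} p(s,a)·σ(s,a)` of the game `G = (ϱ,σ)` with
respect to the projection `P`. -/
noncomputable def val [Fintype n] [Fintype S] [Fintype A]
    (ϱ : S → Matrix n n ℂ) (σ : S → A → ℝ) (P : A → Matrix n n ℂ) : ℝ :=
  ∑ s, ∑ a, induced ϱ P s a * σ s a

/-- The selective value `Sel(G)`: the supremum of `Val(G,P)` over all selective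
projections `P` (families of positive semidefinite matrices) with positive
normalization. -/
noncomputable def sel [Fintype n] [Fintype S] [Fintype A]
    (ϱ : S → Matrix n n ℂ) (σ : S → A → ℝ) : ℝ :=
  sSup {v | ∃ P : A → Matrix n n ℂ,
    (∀ a, (P a).PosSemidef) ∧ 0 < normZ ϱ P ∧ v = val ϱ σ P}

/-- The physical value `Phys(G)`: the supremum of `Val(G,P)` over all physical
projections `P` (selective projections with `∑_a P(a) = 1`). -/
noncomputable def phys [Fintype n] [DecidableEq n] [Fintype S] [Fintype A]
    (ϱ : S → Matrix n n ℂ) (σ : S → A → ℝ) : ℝ :=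
  sSup {v | ∃ P : A → Matrix n n ℂ,
    (∀ a, (P a).PosSemidef) ∧ (∑ a, P a) = 1 ∧ v = val ϱ σ P}

end QRG

open QRG

/-- Binary relative entropy `D(p‖q)`, with the conventions `0·log 0 = 0` and
`0·log(0/0) = 0`. -/
noncomputable def binRelEnt (p q : ℝ) : ℝ :=
  p * Real.log (p / q) + (1 - p) * Real.log ((1 - p) / (1 - q))

/-! The selective value is characterised by operator inequalities: `Sel(G) ≤ c` as soon as
`∑ₛ σ(s,a) ϱ(s) ≤ c ρ` in the Loewner order for every answer `a`, and conversely these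
inequalities hold with `c = Sel(G)`, as one sees by testing the selective projection that puts
a rank-one projector on the single answer `a`. Such inequalities tensorise, since Kronecker
products of positive matrices are monotone in each factor. So if the threshold indicator is
dominated by `β ∏ⱼ wⱼ(sⱼ,aⱼ)` with weights satisfying `∑ₛ wⱼ(s,a) ϱⱼ(s) ≤ cⱼ ρⱼ`, then
`Sel(G_γ) ≤ β ∏ⱼ cⱼ`. The Chernoff weights `wⱼ = 1 + (eᴸ - 1) σⱼ` (convexity of `exp`) give
`e^{-γnL} ∏ⱼ (1 + (eᴸ - 1) δⱼ)`, and AM-GM with the optimal `L` turns this into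
`exp(-n D(γ‖δ))`. The boundary cases are `δ = 0`, where `Sel ≤ 1` suffices, and `γ = 1`, where
the weights `wⱼ = σⱼ` give `∏ⱼ δⱼ ≤ δⁿ`. -/

open scoped MatrixOrder

namespace Matrix

section PiKronecker

variable {ι : Type*} [Fintype ι] {d : ι → Type*} {R : Type*}

def piKronecker [CommMonoid R] (N : ∀ i, Matrix (d i) (d i) R) :
    Matrix (∀ i, d i) (∀ i, d i) R :=
  fun x y => ∏ i, N i (x i) (y i)

theorem piKronecker_mul [CommSemiring R] [DecidableEq ι] [∀ i, Fintype (d i)]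
    (N M : ∀ i, Matrix (d i) (d i) R) :
    piKronecker (fun i => N i * M i) = piKronecker N * piKronecker M := by
  ext x y
  simp only [piKronecker, mul_apply, Fintype.prod_sum, Finset.prod_mul_distrib]

theorem conjTranspose_piKronecker [CommSemiring R] [StarRing R] (N : ∀ i, Matrix (d i) (d i) R) :
    (piKronecker N)ᴴ = piKronecker fun i => (N i)ᴴ := by
  ext x y
  simp [piKronecker, conjTranspose_apply, star_prod]

theorem piKronecker_smul {α : Type*} [CommSemiring α] [CommSemiring R] [Algebra α R] (c : ι → α)
    (N : ∀ i, Matrix (d i) (d i) R) :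
    piKronecker (fun i => c i • N i) = (∏ i, c i) • piKronecker N := by
  ext x y
  simp [piKronecker, Algebra.smul_def, Finset.prod_mul_distrib]

theorem sum_piKronecker [CommSemiring R] [DecidableEq ι] {S : ι → Type*} [∀ i, Fintype (S i)]
    (N : ∀ i, S i → Matrix (d i) (d i) R) :
    ∑ s : ∀ i, S i, piKronecker (fun i => N i (s i)) = piKronecker fun i => ∑ t, N i t := by
  ext x y
  simp only [piKronecker, sum_apply, Fintype.prod_sum]

theorem piKronecker_update_sub [CommRing R] [DecidableEq ι] (N : ∀ i, Matrix (d i) (d i) R)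
    (i : ι) (X Y : Matrix (d i) (d i) R) :
    piKronecker (Function.update N i X) - piKronecker (Function.update N i Y) =
      piKronecker (Function.update N i (X - Y)) := by
  have hcompl : ∀ Z : Matrix (d i) (d i) R, ∀ x y : ∀ j, d j,
      ∏ j ∈ {i}ᶜ, Function.update N i Z j (x j) (y j) = ∏ j ∈ {i}ᶜ, N j (x j) (y j) :=
    fun Z x y => Finset.prod_congr rfl fun j hj => by
      rw [Function.update_of_ne (by simpa using hj)]
  ext x y
  simp only [piKronecker, sub_apply, Fintype.prod_eq_mul_prod_compl i, Function.update_self,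
    hcompl, sub_mul]

variable {𝕜 : Type*} [RCLike 𝕜] [∀ i, Fintype (d i)]

theorem PosSemidef.piKronecker {N : ∀ i, Matrix (d i) (d i) 𝕜} (hN : ∀ i, (N i).PosSemidef) :
    (piKronecker N).PosSemidef := by
  classical
  choose b hb using fun i => CStarAlgebra.nonneg_iff_eq_star_mul_self.mp (hN i).nonneg
  rw [show N = fun i => (b i)ᴴ * b i from funext hb, piKronecker_mul,
    ← conjTranspose_piKronecker]
  exact posSemidef_conjTranspose_mul_self _

theorem piKronecker_mono {L U : ∀ i, Matrix (d i) (d i) 𝕜} (hL : ∀ i, 0 ≤ L i)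
    (hLU : ∀ i, L i ≤ U i) : piKronecker L ≤ piKronecker U := by
  classical
  -- Trade the factors `L i` for `U i` one at a time; each trade adds a Kronecker product of
  -- positive factors, by multilinearity.
  suffices h : ∀ t : Finset ι, piKronecker L ≤ piKronecker fun i => if i ∈ t then U i else L i by
    simpa using h Finset.univ
  intro t
  induction t using Finset.induction_on with
  | empty => simp
  | insert i t hi ih =>
    set M : ∀ i, Matrix (d i) (d i) 𝕜 := fun i => if i ∈ t then U i else L i
    have hM : ∀ j, 0 ≤ M j := fun j => by
      by_cases hj : j ∈ t <;> simp [M, hj, hL j, (hL j).trans (hLU j)]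
    have hU : (fun j => if j ∈ insert i t then U j else L j) = Function.update M i (U i) := by
      funext j
      rcases eq_or_ne j i with rfl | hj
      · simp
      · simp [M, hj]
    have hL' : M = Function.update M i (L i) := by
      simp [M, hi]
    refine ih.trans (sub_nonneg.mp ?_)
    rw [hU, hL', Function.update_idem, piKronecker_update_sub, nonneg_iff_posSemidef]
    refine PosSemidef.piKronecker fun j => ?_
    rcases eq_or_ne j i with rfl | hj
    · simpa using (le_iff.mp (hLU j))
    · simpa [hj] using (hM j).posSemidef

end PiKronecker

section Trace

variable {n 𝕜 : Type*} [Fintype n] [RCLike 𝕜]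

theorem PosSemidef.trace_mul_nonneg {A B : Matrix n n 𝕜} (hA : A.PosSemidef)
    (hB : B.PosSemidef) : 0 ≤ trace (A * B) := by
  classical
  obtain ⟨b, rfl⟩ := CStarAlgebra.nonneg_iff_eq_star_mul_self.mp hA.nonneg
  rw [mul_assoc, trace_mul_comm, star_eq_conjTranspose]
  exact (hB.mul_mul_conjTranspose_same b).trace_nonneg

theorem trace_mul_le_trace_mul {A X Y : Matrix n n 𝕜} (hA : A.PosSemidef) (hXY : X ≤ Y) :
    trace (A * X) ≤ trace (A * Y) := by
  simpa [mul_sub, trace_sub] using hA.trace_mul_nonneg (le_iff.mp hXY)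

theorem trace_vecMulVec_star_mul (v : n → 𝕜) (X : Matrix n n 𝕜) :
    trace (vecMulVec v (star v) * X) = star v ⬝ᵥ X *ᵥ v := by
  rw [vecMulVec_mul, trace_vecMulVec, dotProduct_comm, dotProduct_mulVec]

theorem PosSemidef.of_forall_re_trace_mul_nonneg {X : Matrix n n 𝕜} (hX : X.IsHermitian)
    (h : ∀ Q : Matrix n n 𝕜, Q.PosSemidef → 0 ≤ RCLike.re (trace (Q * X))) : X.PosSemidef := by
  refine .of_dotProduct_mulVec_nonneg hX fun v => RCLike.nonneg_iff.mpr ⟨?_, ?_⟩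
  · simpa [trace_vecMulVec_star_mul] using h _ (posSemidef_vecMulVec_self_star v)
  · exact hX.im_star_dotProduct_mulVec_self v

end Trace

end Matrix

namespace Real

theorem exp_mul_le_one_add_mul {x : ℝ} (L : ℝ) (h0 : 0 ≤ x) (h1 : x ≤ 1) :
    exp (x * L) ≤ 1 + (exp L - 1) * x := by
  have h := convexOn_exp.2 (Set.mem_univ 0) (Set.mem_univ L) (sub_nonneg.2 h1) h0 (by ring)
  simp only [smul_eq_mul, mul_zero, zero_add, exp_zero, mul_one] at h
  linarith

theorem prod_le_mean_pow {ι : Type*} [Fintype ι] {x : ι → ℝ} (hx : ∀ i, 0 ≤ x i) :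
    ∏ i, x i ≤ ((∑ i, x i) / Fintype.card ι) ^ Fintype.card ι := by
  rcases (Fintype.card ι).eq_zero_or_pos with h | h
  · simp [Fintype.card_eq_zero_iff.mp h]
  have hgm := geom_mean_le_arith_mean Finset.univ (fun _ => 1) x (by simp) (by simp [h])
    (fun i _ => hx i)
  simp only [rpow_one, Finset.sum_const, Finset.card_univ, nsmul_eq_mul, mul_one, one_mul] at hgm
  calc ∏ i, x i = ((∏ i, x i) ^ ((Fintype.card ι : ℝ)⁻¹)) ^ Fintype.card ι :=
        (rpow_inv_natCast_pow (Finset.prod_nonneg fun i _ => hx i) h.ne').symm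
    _ ≤ _ := pow_le_pow_left₀ (rpow_nonneg (Finset.prod_nonneg fun i _ => hx i) _) hgm _

theorem prod_one_add_mul_le_pow {ι : Type*} [Fintype ι] {x : ι → ℝ} (hx : ∀ i, 0 ≤ x i) {c : ℝ}
    (hc : 0 ≤ c) :
    ∏ i, (1 + c * x i) ≤ (1 + c * ((∑ i, x i) / Fintype.card ι)) ^ Fintype.card ι := by
  rcases (Fintype.card ι).eq_zero_or_pos with h | h
  · simp [Fintype.card_eq_zero_iff.mp h]
  convert prod_le_mean_pow fun i => add_nonneg zero_le_one (mul_nonneg hc (hx i)) using 2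
  rw [Finset.sum_add_distrib, ← Finset.mul_sum]
  field_simp
  simp

end Real

open Real

section Threshold

variable {ι : Type*} [Fintype ι] {x : ι → ℝ}

theorem ite_le_exp_mul_prod (hx : ∀ i, x i ∈ Set.Icc (0 : ℝ) 1) (θ : ℝ) {L : ℝ} (hL : 0 ≤ L) :
    (if θ ≤ ∑ i, x i then (1 : ℝ) else 0) ≤ exp (-(θ * L)) * ∏ i, (1 + (exp L - 1) * x i) := by
  have hE : 0 ≤ exp L - 1 := sub_nonneg.2 (one_le_exp hL)
  split_ifs with h
  · calc (1 : ℝ) = exp (-(θ * L)) * exp (θ * L) := by rw [← exp_add, neg_add_cancel, exp_zero]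
      _ ≤ exp (-(θ * L)) * exp ((∑ i, x i) * L) := by gcongr
      _ = exp (-(θ * L)) * ∏ i, exp (x i * L) := by rw [Finset.sum_mul, exp_sum]
      _ ≤ _ := by
        gcongr with i
        exact exp_mul_le_one_add_mul L (hx i).1 (hx i).2
  · exact mul_nonneg (exp_pos _).le
      (Finset.prod_nonneg fun i _ => add_nonneg zero_le_one (mul_nonneg hE (hx i).1))

theorem ite_le_prod (hx : ∀ i, x i ∈ Set.Icc (0 : ℝ) 1) {θ : ℝ}
    (hθ : (Fintype.card ι : ℝ) ≤ θ) :
    (if θ ≤ ∑ i, x i then (1 : ℝ) else 0) ≤ ∏ i, x i := by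
  split_ifs with h
  · have hsum : ∑ i, (1 - x i) = 0 := by
      refine le_antisymm ?_ (Finset.sum_nonneg fun i _ => sub_nonneg.2 (hx i).2)
      simp only [Finset.sum_sub_distrib, Finset.sum_const, Finset.card_univ, nsmul_one]
      linarith
    rw [Finset.sum_eq_zero_iff_of_nonneg fun i _ => sub_nonneg.2 (hx i).2] at hsum
    simp [fun i => (sub_eq_zero.mp (hsum i (Finset.mem_univ i))).symm]
  · exact Finset.prod_nonneg fun i _ => (hx i).1

end Threshold

theorem binRelEnt_zero_right_nonpos {p : ℝ} (h0 : 0 ≤ p) (h1 : p ≤ 1) : binRelEnt p 0 ≤ 0 := by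
  simpa [binRelEnt] using mul_nonpos_of_nonneg_of_nonpos (sub_nonneg.2 h1)
    (log_nonpos (sub_nonneg.2 h1) (by linarith))

theorem binRelEnt_one_left (q : ℝ) : binRelEnt 1 q = -log q := by
  simp [binRelEnt]

theorem exp_neg_mul_binRelEnt {p q L : ℝ} (hp : 0 < p) (hq : 0 < q) (hp1 : p < 1) (hq1 : q < 1)
    (hL : exp L = p * (1 - q) / (q * (1 - p))) (N : ℕ) :
    exp (-(p * N * L)) * (1 + (exp L - 1) * q) ^ N = exp (-N * binRelEnt p q) := by
  have h1p : 0 < 1 - p := sub_pos.2 hp1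
  have h1q : 0 < 1 - q := sub_pos.2 hq1
  have hmean : 1 + (exp L - 1) * q = (1 - q) / (1 - p) := by
    rw [hL]
    field_simp
    ring
  have hLlog : L = log p + log (1 - q) - log q - log (1 - p) := by
    rw [← log_exp L, hL, log_div (by positivity) (by positivity), log_mul hp.ne' h1q.ne',
      log_mul hq.ne' h1p.ne']
    ring
  rw [hmean, ← exp_log (div_pos h1q h1p), ← exp_nat_mul, ← exp_add, binRelEnt,
    log_div hp.ne' hq.ne', log_div h1p.ne' h1q.ne', log_div h1q.ne' h1p.ne', hLlog]
  ring_nf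

namespace QRG

section Game

variable {m S A : Type*} [Fintype m] [Fintype S] [Fintype A]
  {ϱ : S → Matrix m m ℂ} {σ : S → A → ℝ} {P : A → Matrix m m ℂ}

theorem normZ_eq_sum_re_trace : normZ ϱ P = ∑ a, (trace (P a * ∑ s, ϱ s)).re := by
  simp only [normZ, Matrix.mul_sum, trace_sum, Complex.re_sum]
  exact Finset.sum_comm

theorem val_eq_sum_re_trace_div :
    val ϱ σ P = (∑ a, (trace (P a * ∑ s, σ s a • ϱ s)).re) / normZ ϱ P := by
  simp only [val, induced, Matrix.mul_sum, mul_smul_comm, trace_sum, trace_smul, Complex.re_sum,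
    Complex.smul_re, smul_eq_mul, Finset.sum_div, div_mul_eq_mul_div, mul_comm (σ _ _)]
  exact Finset.sum_comm

theorem normZ_nonneg (hϱ : ∀ s, (ϱ s).PosSemidef) (hP : ∀ a, (P a).PosSemidef) :
    0 ≤ normZ ϱ P :=
  Finset.sum_nonneg fun s _ => Finset.sum_nonneg fun a _ =>
    Complex.re_le_re ((hP a).trace_mul_nonneg (hϱ s))

theorem val_nonneg (hϱ : ∀ s, (ϱ s).PosSemidef) (hP : ∀ a, (P a).PosSemidef)
    (hσ : ∀ s a, 0 ≤ σ s a) : 0 ≤ val ϱ σ P :=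
  Finset.sum_nonneg fun s _ => Finset.sum_nonneg fun a _ => mul_nonneg
    (div_nonneg (Complex.re_le_re ((hP a).trace_mul_nonneg (hϱ s))) (normZ_nonneg hϱ hP)) (hσ s a)

theorem val_le_of_forall_le {c : ℝ} (hP : ∀ a, (P a).PosSemidef) (hZ : 0 < normZ ϱ P)
    (h : ∀ a, ∑ s, σ s a • ϱ s ≤ c • ∑ s, ϱ s) : val ϱ σ P ≤ c := by
  rw [val_eq_sum_re_trace_div, div_le_iff₀ hZ, normZ_eq_sum_re_trace, Finset.mul_sum]
  refine Finset.sum_le_sum fun a _ => ?_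
  simpa [mul_smul_comm, trace_smul] using Complex.re_le_re (trace_mul_le_trace_mul (hP a) (h a))

theorem sel_le_of_forall_le {c : ℝ} (hc : 0 ≤ c) (h : ∀ a, ∑ s, σ s a • ϱ s ≤ c • ∑ s, ϱ s) :
    sel ϱ σ ≤ c :=
  Real.sSup_le (by rintro _ ⟨P, hP, hZ, rfl⟩; exact val_le_of_forall_le hP hZ h) hc

theorem sum_smul_le_sum {r : S → ℝ} (hϱ : ∀ s, (ϱ s).PosSemidef) (hr : ∀ s, r s ≤ 1) :
    ∑ s, r s • ϱ s ≤ ∑ s, ϱ s :=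
  Finset.sum_le_sum fun s _ =>
    (smul_le_smul_of_nonneg_right (hr s) (hϱ s).nonneg).trans_eq (one_smul ℝ _)

theorem sel_le_one (hϱ : ∀ s, (ϱ s).PosSemidef) (hσ : ∀ s a, σ s a ≤ 1) : sel ϱ σ ≤ 1 :=
  sel_le_of_forall_le zero_le_one fun a =>
    (sum_smul_le_sum hϱ (hσ · a)).trans_eq (one_smul ℝ _).symm

theorem sel_nonneg (hϱ : ∀ s, (ϱ s).PosSemidef) (hσ : ∀ s a, 0 ≤ σ s a) : 0 ≤ sel ϱ σ :=
  Real.sSup_nonneg (by rintro _ ⟨P, hP, -, rfl⟩; exact val_nonneg hϱ hP hσ)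

theorem val_le_sel (hϱ : ∀ s, (ϱ s).PosSemidef) (hσ : ∀ s a, σ s a ≤ 1)
    (hP : ∀ a, (P a).PosSemidef) (hZ : 0 < normZ ϱ P) : val ϱ σ P ≤ sel ϱ σ :=
  le_csSup ⟨1, by rintro _ ⟨P, hP, hZ, rfl⟩; exact val_le_of_forall_le hP hZ fun a =>
      (sum_smul_le_sum hϱ (hσ · a)).trans_eq (one_smul ℝ _).symm⟩
    ⟨P, hP, hZ, rfl⟩

theorem re_trace_mul_le_sel_mul [DecidableEq A] (hϱ : ∀ s, (ϱ s).PosSemidef)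
    (hσ : ∀ s a, σ s a ≤ 1) {Q : Matrix m m ℂ} (hQ : Q.PosSemidef) (a : A) :
    (trace (Q * ∑ s, σ s a • ϱ s)).re ≤ sel ϱ σ * (trace (Q * ∑ s, ϱ s)).re := by
  set P : A → Matrix m m ℂ := Pi.single a Q
  have hP : ∀ a', (P a').PosSemidef := fun a' => by
    rcases eq_or_ne a' a with rfl | h
    · simpa [P] using hQ
    · simpa [P, h] using PosSemidef.zero
  have hsingle : ∀ N : A → Matrix m m ℂ,
      ∑ a', (trace (P a' * N a')).re = (trace (Q * N a)).re := fun N => by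
    rw [Fintype.sum_eq_single a fun a' h => by simp [P, h]]
    simp [P]
  have hZ : normZ ϱ P = (trace (Q * ∑ s, ϱ s)).re :=
    normZ_eq_sum_re_trace.trans (hsingle _)
  rcases (normZ_nonneg hϱ hP).eq_or_lt with hZ0 | hZpos
  · -- `P` is not admissible in `sel` here, but then both sides vanish.
    have hle := Complex.re_le_re (trace_mul_le_trace_mul hQ (sum_smul_le_sum hϱ (hσ · a)))
    rw [← hZ, ← hZ0] at hle
    rwa [← hZ, ← hZ0, mul_zero]
  · have hval := val_le_sel hϱ hσ hP hZpos
    rwa [val_eq_sum_re_trace_div, hsingle (fun a' => ∑ s, σ s a' • ϱ s), div_le_iff₀ hZpos,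
      hZ] at hval

theorem sum_smul_le_sel_smul (hϱ : ∀ s, (ϱ s).PosSemidef) (hσ : ∀ s a, σ s a ≤ 1) (a : A) :
    ∑ s, σ s a • ϱ s ≤ sel ϱ σ • ∑ s, ϱ s := by
  classical
  have hX : (sel ϱ σ • ∑ s, ϱ s - ∑ s, σ s a • ϱ s).IsHermitian :=
    (IsSelfAdjoint.smul (.all _) (isSelfAdjoint_sum _ fun s _ => (hϱ s).isHermitian)).sub
      (isSelfAdjoint_sum _ fun s _ => .smul (.all _) (hϱ s).isHermitian)
  refine le_iff.mpr (.of_forall_re_trace_mul_nonneg hX fun Q hQ => ?_)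
  simpa [mul_sub, trace_sub, mul_smul_comm, trace_smul] using re_trace_mul_le_sel_mul hϱ hσ hQ a

end Game

section Product

variable {ι : Type*} [Fintype ι] {d S A : ι → Type*}

def piEnsemble (ϱ : ∀ i, S i → Matrix (d i) (d i) ℂ) :
    (∀ i, S i) → Matrix (∀ i, d i) (∀ i, d i) ℂ :=
  fun s => piKronecker fun i => ϱ i (s i)

noncomputable def thresholdUtility (σ : ∀ i, S i → A i → ℝ) (θ : ℝ) :
    (∀ i, S i) → (∀ i, A i) → ℝ :=
  fun s a => if θ ≤ ∑ i, σ i (s i) (a i) then 1 else 0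

theorem thresholdUtility_le_one (σ : ∀ i, S i → A i → ℝ) (θ : ℝ) (s : ∀ i, S i)
    (a : ∀ i, A i) : thresholdUtility σ θ s a ≤ 1 := by
  unfold thresholdUtility
  split_ifs <;> norm_num

variable [∀ i, Fintype (d i)] {ϱ : ∀ i, S i → Matrix (d i) (d i) ℂ}

theorem posSemidef_piEnsemble (hϱ : ∀ i s, (ϱ i s).PosSemidef) (s : ∀ i, S i) :
    (piEnsemble ϱ s).PosSemidef :=
  PosSemidef.piKronecker fun i => hϱ i (s i)

variable [DecidableEq ι] [∀ i, Fintype (S i)] [∀ i, Fintype (A i)]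

theorem sel_piEnsemble_le {τ : (∀ i, S i) → (∀ i, A i) → ℝ} {w : ∀ i, S i → A i → ℝ}
    {c : ι → ℝ} {β : ℝ} (hϱ : ∀ i s, (ϱ i s).PosSemidef) (hw : ∀ i s a, 0 ≤ w i s a)
    (hβ : 0 ≤ β) (hc : ∀ i, 0 ≤ c i) (hwc : ∀ i a, ∑ s, w i s a • ϱ i s ≤ c i • ∑ s, ϱ i s)
    (hτ : ∀ s a, τ s a ≤ β * ∏ i, w i (s i) (a i)) :
    sel (piEnsemble ϱ) τ ≤ β * ∏ i, c i := by
  refine sel_le_of_forall_le (mul_nonneg hβ (Finset.prod_nonneg fun i _ => hc i)) fun a => ?_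
  calc ∑ s, τ s a • piEnsemble ϱ s
      ≤ ∑ s : ∀ i, S i, (β * ∏ i, w i (s i) (a i)) • piKronecker (fun i => ϱ i (s i)) :=
        Finset.sum_le_sum fun s _ =>
          smul_le_smul_of_nonneg_right (hτ s a) (posSemidef_piEnsemble hϱ s).nonneg
    _ = β • piKronecker (fun i => ∑ t, w i t (a i) • ϱ i t) := by
        simp_rw [mul_smul, ← piKronecker_smul]
        rw [← Finset.smul_sum, sum_piKronecker fun i t => w i t (a i) • ϱ i t]
    _ ≤ β • piKronecker (fun i => c i • ∑ t, ϱ i t) :=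
        smul_le_smul_of_nonneg_left (piKronecker_mono (fun i => Finset.sum_nonneg fun t _ =>
          smul_nonneg (hw i t (a i)) (hϱ i t).nonneg) fun i => hwc i (a i)) hβ
    _ = (β * ∏ i, c i) • ∑ s, piEnsemble ϱ s := by
        unfold piEnsemble
        rw [piKronecker_smul, sum_piKronecker ϱ, mul_smul]

variable {σ : ∀ i, S i → A i → ℝ}

theorem sel_threshold_le_exp_mul_prod (hϱ : ∀ i s, (ϱ i s).PosSemidef)
    (hσ : ∀ i s a, σ i s a ∈ Set.Icc (0 : ℝ) 1) (θ : ℝ) {L : ℝ} (hL : 0 ≤ L) :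
    sel (piEnsemble ϱ) (thresholdUtility σ θ) ≤
      exp (-(θ * L)) * ∏ i, (1 + (exp L - 1) * sel (ϱ i) (σ i)) := by
  have hE : 0 ≤ exp L - 1 := sub_nonneg.2 (one_le_exp hL)
  refine sel_piEnsemble_le (τ := thresholdUtility σ θ)
    (w := fun i s a => 1 + (exp L - 1) * σ i s a) hϱ
    (fun i s a => add_nonneg zero_le_one (mul_nonneg hE (hσ i s a).1)) (exp_pos _).le
    (fun i => add_nonneg zero_le_one (mul_nonneg hE (sel_nonneg (hϱ i) (hσ i · · |>.1))))
    (fun i a => ?_) fun s a => ?_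
  · simp only [add_smul, one_smul, Finset.sum_add_distrib, mul_smul, ← Finset.smul_sum]
    gcongr
    exact sum_smul_le_sel_smul (hϱ i) (hσ i · · |>.2) a
  · exact ite_le_exp_mul_prod (x := fun i => σ i (s i) (a i)) (fun i => hσ i (s i) (a i)) θ hL

theorem sel_threshold_le_prod (hϱ : ∀ i s, (ϱ i s).PosSemidef)
    (hσ : ∀ i s a, σ i s a ∈ Set.Icc (0 : ℝ) 1) {θ : ℝ} (hθ : (Fintype.card ι : ℝ) ≤ θ) :
    sel (piEnsemble ϱ) (thresholdUtility σ θ) ≤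
      ∏ i, sel (ϱ i) (σ i) := by
  refine (sel_piEnsemble_le (τ := thresholdUtility σ θ) (w := σ) (β := 1) hϱ (hσ · · · |>.1)
    zero_le_one (fun i => sel_nonneg (hϱ i) (hσ i · · |>.1))
    (fun i => sum_smul_le_sel_smul (hϱ i) (hσ i · · |>.2)) fun s a => ?_).trans_eq (one_mul _)
  exact (ite_le_prod (fun i => hσ i (s i) (a i)) hθ).trans_eq (one_mul _).symm

theorem sel_threshold_le_exp_neg_mul_binRelEnt (hϱ : ∀ i s, (ϱ i s).PosSemidef)
    (hσ : ∀ i s a, σ i s a ∈ Set.Icc (0 : ℝ) 1) {γ : ℝ}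
    (hγ₁ : (∑ i, sel (ϱ i) (σ i)) / Fintype.card ι ≤ γ) (hγ₂ : γ ≤ 1) :
    sel (piEnsemble ϱ) (thresholdUtility σ (γ * Fintype.card ι)) ≤
      exp (-(Fintype.card ι : ℝ) * binRelEnt γ ((∑ i, sel (ϱ i) (σ i)) / Fintype.card ι)) := by
  set n := Fintype.card ι
  set δ := (∑ i, sel (ϱ i) (σ i)) / n
  have hsel0 : ∀ i, 0 ≤ sel (ϱ i) (σ i) := fun i => sel_nonneg (hϱ i) (hσ i · · |>.1)
  rcases (div_nonneg (Finset.sum_nonneg fun i _ => hsel0 i) n.cast_nonneg : 0 ≤ δ).eq_or_lt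
    with hδ0 | hδ0
  · have hD := binRelEnt_zero_right_nonpos (hδ0.trans_le hγ₁) hγ₂
    rw [show δ = 0 from hδ0.symm]
    exact (sel_le_one (posSemidef_piEnsemble hϱ) (thresholdUtility_le_one σ _)).trans
      (one_le_exp (by nlinarith [n.cast_nonneg (α := ℝ)]))
  rcases hγ₂.eq_or_lt with rfl | hγ₁'
  · calc _ ≤ ∏ i, sel (ϱ i) (σ i) := sel_threshold_le_prod hϱ hσ (one_mul _).ge
      _ ≤ δ ^ n := prod_le_mean_pow hsel0
      _ = _ := by rw [binRelEnt_one_left, neg_mul_neg, exp_nat_mul, exp_log hδ0]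
  · -- `L` minimises `L ↦ e^{-γnL} (1 + (eᴸ - 1) δ)ⁿ`.
    set L := log (γ * (1 - δ) / (δ * (1 - γ)))
    have hratio : 1 ≤ γ * (1 - δ) / (δ * (1 - γ)) := by
      rw [one_le_div (by nlinarith)]
      nlinarith
    have hL : exp L = γ * (1 - δ) / (δ * (1 - γ)) := exp_log (by linarith)
    calc _ ≤ exp (-(γ * n * L)) * ∏ i, (1 + (exp L - 1) * sel (ϱ i) (σ i)) :=
          sel_threshold_le_exp_mul_prod hϱ hσ _ (log_nonneg hratio)
      _ ≤ exp (-(γ * n * L)) * (1 + (exp L - 1) * δ) ^ n := by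
          gcongr
          exact prod_one_add_mul_le_pow hsel0 (sub_nonneg.2 (one_le_exp (log_nonneg hratio)))
      _ = _ := exp_neg_mul_binRelEnt (hδ0.trans_le hγ₁) hδ0 hγ₁' (hγ₁.trans_lt hγ₁') hL n

end Product

end QRG

theorem sel_threshold_game_general (n : ℕ)
    (d : Fin n → Type) [∀ j, Fintype (d j)]
    (S A : Fin n → Type) [∀ j, Fintype (S j)] [∀ j, Fintype (A j)]
    (ϱ : ∀ j, S j → Matrix (d j) (d j) ℂ) (σ : ∀ j, S j → A j → ℝ)
    (hσ : ∀ j s a, σ j s a ∈ Set.Icc (0 : ℝ) 1)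
    (hpsd : ∀ j s, (ϱ j s).PosSemidef)
    (δ : Fin n → ℝ) (hδ : ∀ j, sel (ϱ j) (σ j) = δ j)
    (γ : ℝ) (hγ₁ : (∑ j, δ j) / n ≤ γ) (hγ₂ : γ ≤ 1) :
    sel (fun s : ∀ j, S j =>
        (fun x y => ∏ j, ϱ j (s j) (x j) (y j) : Matrix (∀ j, d j) (∀ j, d j) ℂ))
      (fun s (a : ∀ j, A j) => if γ * n ≤ ∑ j, σ j (s j) (a j) then (1 : ℝ) else 0) ≤
      2 * Real.exp (-(n : ℝ) * binRelEnt γ ((∑ j, δ j) / n)) := by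
  have h := sel_threshold_le_exp_neg_mul_binRelEnt hpsd hσ (γ := γ)
    (by simpa only [hδ, Fintype.card_fin] using hγ₁) hγ₂
  simp only [hδ, Fintype.card_fin] at h
  exact h.trans (le_mul_of_one_le_left (exp_pos _).le one_le_two)

/-- Selective value of a threshold game: if `n` weighted quantum retrieval games with
`[0,1]`-valued utilities have selective values `δ_j`, then the threshold game on their
tensor product, accepting iff `∑_j σ_j(s_j,a_j) ≥ γ·n`, has selective value at most
`2·exp(−n·D(γ‖δ))` with `δ = (1/n)∑_j δ_j`. -/
theorem sel_threshold_game (n : ℕ) (hn : 0 < n)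
    (d : Fin n → Type) [∀ j, Fintype (d j)] [∀ j, DecidableEq (d j)]
    (S A : Fin n → Type) [∀ j, Fintype (S j)] [∀ j, Fintype (A j)]
    [∀ j, Nonempty (S j)] [∀ j, Nonempty (A j)]
    (ϱ : ∀ j, S j → Matrix (d j) (d j) ℂ) (σ : ∀ j, S j → A j → ℝ)
    (hσ : ∀ j s a, σ j s a ∈ Set.Icc (0 : ℝ) 1)
    (hpsd : ∀ j s, (ϱ j s).PosSemidef) (htr : ∀ j, ∑ s, (ϱ j s).trace = 1)
    (hpd : ∀ j, (∑ s, ϱ j s).PosDef)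
    (δ : Fin n → ℝ) (hδ : ∀ j, sel (ϱ j) (σ j) = δ j)
    (γ : ℝ) (hγ₁ : (∑ j, δ j) / n ≤ γ) (hγ₂ : γ ≤ 1) (hγn : ∃ m : ℕ, γ * n = (m : ℝ)) :
    sel (fun s : ∀ j, S j =>
        (fun x y => ∏ j, ϱ j (s j) (x j) (y j) : Matrix (∀ j, d j) (∀ j, d j) ℂ))
      (fun s (a : ∀ j, A j) => if γ * n ≤ ∑ j, σ j (s j) (a j) then (1 : ℝ) else 0) ≤
      2 * Real.exp (-(n : ℝ) * binRelEnt γ ((∑ j, δ j) / n)) :=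
  sel_threshold_game_general n d S A ϱ σ hσ hpsd δ hδ γ hγ₁ hγ₂
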